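/- arXiv:2010.06190 — 6 statements merged into one kernel-verified Lean document; each statement's English description precedes it below -/
import Mathlib

section
/- Let κ = (3 − √5)/2. For every real numbers a ≥ b ≥ 0 with a > 0, the quantity (a² − b²)²/a² + b² is at least κ·a². -/
lemma sub_sq_div_add_sub_eq {x : ℝ} (y : ℝ) (hx : x ≠ 0) :
    (x - y) ^ 2 / x + y - 3 / 4 * x = (x / 2 - y) ^ 2 / x := by
  field_simp
  ring

lemma three_quarters_mul_le_sub_sq_div_add {x : ℝ} (y : ℝ) (hx : 0 < x) :
    3 / 4 * x ≤ (x - y) ^ 2 / x + y := by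
  have h := sub_sq_div_add_sub_eq y hx.ne'
  have : 0 ≤ (x / 2 - y) ^ 2 / x := by positivity
  linarith

lemma three_sub_sqrt_five_div_two_le : (3 - √5) / 2 ≤ 3 / 4 := by
  have : (3 / 2 : ℝ) ≤ √5 := Real.le_sqrt_of_sq_le (by norm_num)
  linarith

theorem stmt0_general (a b : ℝ) (ha : 0 < a) :
    (3 - Real.sqrt 5) / 2 * a ^ 2 ≤ (a ^ 2 - b ^ 2) ^ 2 / a ^ 2 + b ^ 2 :=
  calc (3 - Real.sqrt 5) / 2 * a ^ 2
      ≤ 3 / 4 * a ^ 2 := mul_le_mul_of_nonneg_right three_sub_sqrt_five_div_two_le (sq_nonneg a)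
    _ ≤ (a ^ 2 - b ^ 2) ^ 2 / a ^ 2 + b ^ 2 :=
      three_quarters_mul_le_sub_sq_div_add _ (by positivity)

theorem stmt0 (a b : ℝ) (hba : b ≤ a) (hb : 0 ≤ b) (ha : 0 < a) :
    (3 - Real.sqrt 5) / 2 * a ^ 2 ≤ (a ^ 2 - b ^ 2) ^ 2 / a ^ 2 + b ^ 2 :=
  stmt0_general a b ha
end

section
/- A functional φ : [0,T] × C([−h,T], ℝⁿ) → ℝ is continuous with respect to the pseudometric ρ((t,x(·)),(τ,y(·))) = |t−τ| + ‖x(·∧t) − y(·∧τ)‖_{[−h,T]} if and only if φ is non-anticipative and continuous with respect to the product metric dist((t,x(·)),(τ,y(·))) = |t−τ| + ‖x(·)−y(·)‖_{[−h,T]}. -/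
noncomputable section

/-- Uniform (supremum) norm of a path over `[-h, T]`. -/
def unifNorm (n : ℕ) (h T : ℝ) (x : ℝ → EuclideanSpace ℝ (Fin n)) : ℝ :=
  sSup ((fun ξ => ‖x ξ‖) '' Set.Icc (-h) T)

/-- The path `x` stopped at time `t`: `ξ ↦ x (min ξ t)`. -/
def stopped (n : ℕ) (t : ℝ) (x : ℝ → EuclideanSpace ℝ (Fin n)) :
    ℝ → EuclideanSpace ℝ (Fin n) :=
  fun ξ => x (min ξ t)

/-- The pseudometric `ρ` on `[0,T] × C([-h,T], ℝⁿ)`. -/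
def rho (n : ℕ) (h T : ℝ)
    (p q : ℝ × (ℝ → EuclideanSpace ℝ (Fin n))) : ℝ :=
  |p.1 - q.1| + unifNorm n h T (fun ξ => stopped n p.1 p.2 ξ - stopped n q.1 q.2 ξ)

/-- The product metric `dist` on `[0,T] × C([-h,T], ℝⁿ)`. -/
def dst (n : ℕ) (h T : ℝ)
    (p q : ℝ × (ℝ → EuclideanSpace ℝ (Fin n))) : ℝ :=
  |p.1 - q.1| + unifNorm n h T (fun ξ => p.2 ξ - q.2 ξ)

/-- The domain `[0,T] × C([-h,T], ℝⁿ)`. -/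
def Dom (n : ℕ) (h T : ℝ) : Set (ℝ × (ℝ → EuclideanSpace ℝ (Fin n))) :=
  {p | p.1 ∈ Set.Icc 0 T ∧ ContinuousOn p.2 (Set.Icc (-h) T)}

/-- Continuity of a real-valued functional with respect to a (pseudo)metric `d` on a set `S`. -/
def ContWrt (n : ℕ)
    (d : ℝ × (ℝ → EuclideanSpace ℝ (Fin n)) → ℝ × (ℝ → EuclideanSpace ℝ (Fin n)) → ℝ)
    (S : Set (ℝ × (ℝ → EuclideanSpace ℝ (Fin n))))
    (φ : ℝ → (ℝ → EuclideanSpace ℝ (Fin n)) → ℝ) : Prop :=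
  ∀ p ∈ S, ∀ ε > 0, ∃ δ > 0, ∀ q ∈ S, d p q < δ → |φ q.1 q.2 - φ p.1 p.2| < ε

/-- A functional is non-anticipative if its value at time `t` depends only on the
path restricted to `[-h, t]`. -/
def NonAnticipative (n : ℕ) (h T : ℝ)
    (φ : ℝ → (ℝ → EuclideanSpace ℝ (Fin n)) → ℝ) : Prop :=
  ∀ t ∈ Set.Ico 0 T, ∀ x y : ℝ → EuclideanSpace ℝ (Fin n),
    ContinuousOn x (Set.Icc (-h) T) → ContinuousOn y (Set.Icc (-h) T) →
    (∀ τ ∈ Set.Icc (-h) t, x τ = y τ) → φ t x = φ t y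

/-!
`ρ((t,x),(τ,y))` is the product distance between the stopped paths `(t, x(·∧t))` and
`(τ, y(·∧τ))`. Paths agreeing up to time `t` are at `ρ`-distance zero, so a `ρ`-continuous
functional is non-anticipative; it is also `dist`-continuous because, by uniform continuity of
`x` on `[-h, T]`, moving the stopping time from `t` to `τ` changes `x(·∧t)` uniformly by little.
Conversely a non-anticipative functional satisfies `φ(t, x) = φ(t, x(·∧t))`, so its
`ρ`-continuity is `dist`-continuity read through the stopping map.
-/

variable {n : ℕ} {h T : ℝ}

lemma unifNorm_le {x : ℝ → EuclideanSpace ℝ (Fin n)} {M : ℝ} (hM : 0 ≤ M)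
    (hx : ∀ ξ ∈ Set.Icc (-h) T, ‖x ξ‖ ≤ M) : unifNorm n h T x ≤ M :=
  Real.sSup_le (by rintro _ ⟨ξ, hξ, rfl⟩; exact hx ξ hξ) hM

lemma norm_le_unifNorm {x : ℝ → EuclideanSpace ℝ (Fin n)}
    (hx : ContinuousOn x (Set.Icc (-h) T)) {ξ : ℝ} (hξ : ξ ∈ Set.Icc (-h) T) :
    ‖x ξ‖ ≤ unifNorm n h T x :=
  le_csSup (isCompact_Icc.image_of_continuousOn hx.norm).bddAbove ⟨ξ, hξ, rfl⟩

lemma unifNorm_nonneg (x : ℝ → EuclideanSpace ℝ (Fin n)) : 0 ≤ unifNorm n h T x :=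
  Real.sSup_nonneg (by rintro _ ⟨ξ, -, rfl⟩; exact norm_nonneg _)

lemma unifNorm_eq_zero {x : ℝ → EuclideanSpace ℝ (Fin n)}
    (hx : ∀ ξ ∈ Set.Icc (-h) T, x ξ = 0) : unifNorm n h T x = 0 :=
  le_antisymm (unifNorm_le le_rfl fun ξ hξ => by simp [hx ξ hξ]) (unifNorm_nonneg x)

lemma min_mem_Icc_of_le {α : Type*} [LinearOrder α] {a b ξ t : α}
    (hξ : ξ ∈ Set.Icc a b) (ht : a ≤ t) : min ξ t ∈ Set.Icc a b :=
  ⟨le_min hξ.1 ht, min_le_of_left_le hξ.2⟩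

lemma abs_min_sub_min_le_abs_sub {α : Type*} [AddCommGroup α] [LinearOrder α]
    [IsOrderedAddMonoid α] (ξ t τ : α) : |min ξ t - min ξ τ| ≤ |t - τ| := by
  simpa using abs_min_sub_min_le_max ξ t ξ τ

lemma continuousOn_stopped {x : ℝ → EuclideanSpace ℝ (Fin n)}
    (hx : ContinuousOn x (Set.Icc (-h) T)) {t : ℝ} (ht : -h ≤ t) :
    ContinuousOn (stopped n t x) (Set.Icc (-h) T) :=
  hx.comp (continuous_id.min continuous_const).continuousOn
    fun _ hξ => min_mem_Icc_of_le hξ ht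

lemma stopped_mem_Dom (hh : 0 ≤ h) {p : ℝ × (ℝ → EuclideanSpace ℝ (Fin n))}
    (hp : p ∈ Dom n h T) : (p.1, stopped n p.1 p.2) ∈ Dom n h T :=
  ⟨hp.1, continuousOn_stopped hp.2 (by linarith [hp.1.1])⟩

lemma rho_eq_dst_stopped (p q : ℝ × (ℝ → EuclideanSpace ℝ (Fin n))) :
    rho n h T p q = dst n h T (p.1, stopped n p.1 p.2) (q.1, stopped n q.1 q.2) :=
  rfl

lemma ContWrt.eq_of_le_zero
    {d : ℝ × (ℝ → EuclideanSpace ℝ (Fin n)) → ℝ × (ℝ → EuclideanSpace ℝ (Fin n)) → ℝ}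
    {S : Set (ℝ × (ℝ → EuclideanSpace ℝ (Fin n)))}
    {φ : ℝ → (ℝ → EuclideanSpace ℝ (Fin n)) → ℝ}
    (hφ : ContWrt n d S φ) {p q : ℝ × (ℝ → EuclideanSpace ℝ (Fin n))}
    (hp : p ∈ S) (hq : q ∈ S) (hd : d p q ≤ 0) : φ q.1 q.2 = φ p.1 p.2 := by
  by_contra hne
  obtain ⟨δ, hδ, H⟩ := hφ p hp _ (abs_pos.mpr (sub_ne_zero.mpr hne))
  exact lt_irrefl _ (H q hq (hd.trans_lt hδ))

lemma ContWrt.of_finer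
    {d d' : ℝ × (ℝ → EuclideanSpace ℝ (Fin n)) → ℝ × (ℝ → EuclideanSpace ℝ (Fin n)) → ℝ}
    {S : Set (ℝ × (ℝ → EuclideanSpace ℝ (Fin n)))}
    {φ : ℝ → (ℝ → EuclideanSpace ℝ (Fin n)) → ℝ} (hφ : ContWrt n d S φ)
    (hdd' : ∀ p ∈ S, ∀ ε > 0, ∃ δ > 0, ∀ q ∈ S, d' p q < δ → d p q < ε) :
    ContWrt n d' S φ := by
  intro p hp ε hε
  obtain ⟨η, hη, hφη⟩ := hφ p hp ε hε
  obtain ⟨δ, hδ, hdη⟩ := hdd' p hp η hη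
  exact ⟨δ, hδ, fun q hq hq' => hφη q hq (hdη q hq hq')⟩

lemma rho_eq_zero_of_eqOn {t : ℝ} (ht : -h ≤ t) {x y : ℝ → EuclideanSpace ℝ (Fin n)}
    (hxy : ∀ τ ∈ Set.Icc (-h) t, x τ = y τ) : rho n h T (t, x) (t, y) = 0 := by
  simp only [rho, sub_self, abs_zero, zero_add]
  exact unifNorm_eq_zero fun ξ hξ => sub_eq_zero.mpr <| hxy _ ⟨le_min hξ.1 ht, min_le_right _ _⟩

lemma dst_stopped_eq_zero_of_le {t : ℝ} (ht : T ≤ t) (x : ℝ → EuclideanSpace ℝ (Fin n)) :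
    dst n h T (t, x) (t, stopped n t x) = 0 := by
  simp only [dst, sub_self, abs_zero, zero_add]
  exact unifNorm_eq_zero fun ξ hξ => by simp [stopped, min_eq_left (hξ.2.trans ht)]

/-- `NonAnticipative` only constrains times `t < T`; at `t = T` the stopped path agrees with
the original one on `[-h, T]`, so they are at `dst`-distance zero. -/
lemma apply_stopped_eq (hh : 0 ≤ h) {φ : ℝ → (ℝ → EuclideanSpace ℝ (Fin n)) → ℝ}
    (hNA : NonAnticipative n h T φ) (hφ : ContWrt n (dst n h T) (Dom n h T) φ)
    {q : ℝ × (ℝ → EuclideanSpace ℝ (Fin n))} (hq : q ∈ Dom n h T) :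
    φ q.1 (stopped n q.1 q.2) = φ q.1 q.2 := by
  have hq' := stopped_mem_Dom hh hq
  rcases hq.1.2.lt_or_eq with hlt | rfl
  · exact (hNA q.1 ⟨hq.1.1, hlt⟩ q.2 _ hq.2 hq'.2
      fun τ hτ => by simp [stopped, min_eq_left hτ.2]).symm
  · exact ContWrt.eq_of_le_zero hφ hq hq' (dst_stopped_eq_zero_of_le le_rfl q.2).le

lemma rho_le_dst_add (hh : 0 ≤ h) {p q : ℝ × (ℝ → EuclideanSpace ℝ (Fin n))}
    (hp : p ∈ Dom n h T) (hq : q ∈ Dom n h T) {η : ℝ} (hη : 0 ≤ η)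
    (hpη : ∀ ξ ∈ Set.Icc (-h) T, ‖p.2 (min ξ p.1) - p.2 (min ξ q.1)‖ ≤ η) :
    rho n h T p q ≤ dst n h T p q + η := by
  have hstop : unifNorm n h T (fun ξ => stopped n p.1 p.2 ξ - stopped n q.1 q.2 ξ) ≤
      η + unifNorm n h T (fun ξ => p.2 ξ - q.2 ξ) := by
    refine unifNorm_le (add_nonneg hη (unifNorm_nonneg _)) fun ξ hξ => ?_
    calc ‖p.2 (min ξ p.1) - q.2 (min ξ q.1)‖
        ≤ ‖p.2 (min ξ p.1) - p.2 (min ξ q.1)‖ + ‖p.2 (min ξ q.1) - q.2 (min ξ q.1)‖ :=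
          norm_sub_le_norm_sub_add_norm_sub _ _ _
      _ ≤ η + unifNorm n h T (fun ξ => p.2 ξ - q.2 ξ) :=
          add_le_add (hpη ξ hξ) <| norm_le_unifNorm (hp.2.sub hq.2)
            (min_mem_Icc_of_le hξ (by linarith [hq.1.1]))
  simp only [rho, dst]
  linarith

lemma exists_rho_lt_of_dst_lt (hh : 0 ≤ h) {p : ℝ × (ℝ → EuclideanSpace ℝ (Fin n))}
    (hp : p ∈ Dom n h T) {ε : ℝ} (hε : 0 < ε) :
    ∃ δ > 0, ∀ q ∈ Dom n h T, dst n h T p q < δ → rho n h T p q < ε := by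
  obtain ⟨δ₁, hδ₁, hp₁⟩ := Metric.uniformContinuousOn_iff.mp
    (isCompact_Icc.uniformContinuousOn_of_continuous hp.2) (ε / 2) (half_pos hε)
  refine ⟨min δ₁ (ε / 2), lt_min hδ₁ (half_pos hε), fun q hq hpq => ?_⟩
  have htime : |p.1 - q.1| < δ₁ := by
    have := unifNorm_nonneg (h := h) (T := T) fun ξ => p.2 ξ - q.2 ξ
    simp only [dst] at hpq
    linarith [min_le_left δ₁ (ε / 2)]
  have hclose : ∀ ξ ∈ Set.Icc (-h) T, ‖p.2 (min ξ p.1) - p.2 (min ξ q.1)‖ ≤ ε / 2 := by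
    intro ξ hξ
    rw [← dist_eq_norm]
    refine (hp₁ _ (min_mem_Icc_of_le hξ (by linarith [hp.1.1])) _
      (min_mem_Icc_of_le hξ (by linarith [hq.1.1])) ?_).le
    rw [Real.dist_eq]
    exact (abs_min_sub_min_le_abs_sub ξ p.1 q.1).trans_lt htime
  linarith [rho_le_dst_add hh hp hq (half_pos hε).le hclose, min_le_right δ₁ (ε / 2)]

lemma nonAnticipative_of_contWrt_rho (hh : 0 ≤ h) {φ : ℝ → (ℝ → EuclideanSpace ℝ (Fin n)) → ℝ}
    (hφ : ContWrt n (rho n h T) (Dom n h T) φ) : NonAnticipative n h T φ := by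
  intro t ht x y hx hy hxy
  exact (ContWrt.eq_of_le_zero hφ ⟨⟨ht.1, ht.2.le⟩, hx⟩ ⟨⟨ht.1, ht.2.le⟩, hy⟩
    (rho_eq_zero_of_eqOn (by linarith [ht.1]) hxy).le).symm

lemma contWrt_rho_of_nonAnticipative (hh : 0 ≤ h)
    {φ : ℝ → (ℝ → EuclideanSpace ℝ (Fin n)) → ℝ} (hNA : NonAnticipative n h T φ)
    (hφ : ContWrt n (dst n h T) (Dom n h T) φ) : ContWrt n (rho n h T) (Dom n h T) φ := by
  intro p hp ε hε
  obtain ⟨δ, hδ, hpδ⟩ := hφ _ (stopped_mem_Dom hh hp) ε hε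
  refine ⟨δ, hδ, fun q hq hpq => ?_⟩
  rw [rho_eq_dst_stopped] at hpq
  rw [← apply_stopped_eq hh hNA hφ hq, ← apply_stopped_eq hh hNA hφ hp]
  exact hpδ _ (stopped_mem_Dom hh hq) hpq

theorem stmt4_general (n : ℕ) (h T : ℝ) (hh : 0 < h)
    (φ : ℝ → (ℝ → EuclideanSpace ℝ (Fin n)) → ℝ) :
    ContWrt n (rho n h T) (Dom n h T) φ ↔
      NonAnticipative n h T φ ∧ ContWrt n (dst n h T) (Dom n h T) φ :=
  ⟨fun hφ => ⟨nonAnticipative_of_contWrt_rho hh.le hφ,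
      ContWrt.of_finer hφ fun _ hp _ hε => exists_rho_lt_of_dst_lt hh.le hp hε⟩,
    fun ⟨hNA, hφ⟩ => contWrt_rho_of_nonAnticipative hh.le hNA hφ⟩

theorem stmt4 (n : ℕ) (h T : ℝ) (hh : 0 < h) (hT : 0 < T)
    (φ : ℝ → (ℝ → EuclideanSpace ℝ (Fin n)) → ℝ) :
    ContWrt n (rho n h T) (Dom n h T) φ ↔
      NonAnticipative n h T φ ∧ ContWrt n (dst n h T) (Dom n h T) φ :=
  stmt4_general n h T hh φ
end
end

section
/- If a functional φ : [0,T] × C([−h,T], ℝⁿ) → ℝ is ci-differentiable at points (t, x(·)) and (t, y(·)) with x(τ) = y(τ) for all τ ∈ [−h,t], then φ(t,x(·)) = φ(t,y(·)), ∂_t φ(t,x(·)) = ∂_t φ(t,y(·)), and ∇φ(t,x(·)) = ∇φ(t,y(·)). -/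
noncomputable section

open scoped RealInnerProductSpace

/-- `y` is a Lipschitz extension of `x` beyond time `t`: it is continuous on `[-h,T]`,
agrees with `x` on `[-h,t]`, and is Lipschitz continuous on `[t,T]`. -/
def LipExt (n : ℕ) (h T t : ℝ) (x y : ℝ → EuclideanSpace ℝ (Fin n)) : Prop :=
  ContinuousOn y (Set.Icc (-h) T) ∧ (∀ τ ∈ Set.Icc (-h) t, y τ = x τ) ∧
    ∃ K : NNReal, LipschitzOnWith K y (Set.Icc t T)

/-- `φ` is ci-differentiable at `(t, x)` with ci-derivatives `a` (time) and `b` (impulse). -/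
def CiDiffAt (n : ℕ) (h T : ℝ) (φ : ℝ → (ℝ → EuclideanSpace ℝ (Fin n)) → ℝ)
    (t : ℝ) (x : ℝ → EuclideanSpace ℝ (Fin n)) (a : ℝ) (b : EuclideanSpace ℝ (Fin n)) :
    Prop :=
  ∀ y : ℝ → EuclideanSpace ℝ (Fin n), LipExt n h T t x y →
    ∃ o : ℝ → ℝ,
      (∀ τ ∈ Set.Ioc t T,
        φ τ y - φ t x = a * (τ - t) + ⟪b, y τ - x t⟫ + o (τ - t)) ∧
      Filter.Tendsto (fun δ => o δ / δ) (nhdsWithin 0 (Set.Ioi 0)) (nhds 0)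

/-!
Extend `x` past `t` affinely with an arbitrary slope `v`. The extension is a Lipschitz extension
of both `x` and `y`, so subtracting the two ci-expansions at `t + δ` gives
`φ t y - φ t x = (a - a' + ⟪b - b', v⟫) δ + o(δ)` for small `δ > 0`. Letting `δ ↓ 0` shows that
both the constant and the slope vanish; `v = 0` and `v = b - b'` then give the three equalities.
-/

open Filter Topology Set

section AffineExtension

variable {E : Type*} [NormedAddCommGroup E] [NormedSpace ℝ E]

def affineExt (x : ℝ → E) (t : ℝ) (v : E) : ℝ → E := fun τ =>
  if τ ≤ t then x τ else x t + (τ - t) • v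

variable {x : ℝ → E} {t τ : ℝ} {v : E}

theorem affineExt_of_le (hτ : τ ≤ t) : affineExt x t v τ = x τ := if_pos hτ

theorem affineExt_of_ge (hτ : t ≤ τ) : affineExt x t v τ = x t + (τ - t) • v := by
  rcases hτ.eq_or_lt with rfl | hlt
  · simp [affineExt]
  · exact if_neg hlt.not_ge

theorem continuousOn_affineExt {s : Set ℝ} (hx : ContinuousOn x s) :
    ContinuousOn (affineExt x t v) s := by
  refine ContinuousOn.if ?_ (hx.mono inter_subset_left) (by fun_prop : Continuous _).continuousOn
  intro τ hτ
  have hτt : τ = t := by simpa only [Iic_def, frontier_Iic, mem_singleton_iff] using hτ.2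
  simp [hτt]

theorem lipschitzOnWith_affineExt : LipschitzOnWith ‖v‖₊ (affineExt x t v) (Ici t) := by
  rw [lipschitzOnWith_iff_dist_le_mul]
  intro τ₁ h₁ τ₂ h₂
  rw [affineExt_of_ge h₁, affineExt_of_ge h₂, dist_add_left, dist_eq_norm, ← sub_smul,
    sub_sub_sub_cancel_right, norm_smul, mul_comm, Real.dist_eq, Real.norm_eq_abs]
  rfl

end AffineExtension

theorem eq_zero_of_eventually_eq_mul_add {D c : ℝ} {e : ℝ → ℝ}
    (he : Tendsto (fun δ => e δ / δ) (𝓝[>] 0) (𝓝 0))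
    (hD : ∀ᶠ δ in 𝓝[>] 0, D = c * δ + e δ) : D = 0 ∧ c = 0 := by
  have hid : Tendsto (fun δ : ℝ => δ) (𝓝[>] 0) (𝓝 0) :=
    tendsto_nhdsWithin_of_tendsto_nhds tendsto_id
  have he₀ : Tendsto e (𝓝[>] 0) (𝓝 0) := by
    have := he.mul hid
    rw [mul_zero] at this
    refine this.congr' ?_
    filter_upwards [self_mem_nhdsWithin] with δ hδ using div_mul_cancel₀ _ (ne_of_gt hδ)
  have hD₀ : D = 0 := by
    have := (hid.const_mul c).add he₀
    rw [mul_zero, add_zero] at this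
    exact tendsto_nhds_unique (tendsto_const_nhds.congr' hD) this
  refine ⟨hD₀, ?_⟩
  have hslope : Tendsto (fun δ => e δ / δ) (𝓝[>] 0) (𝓝 (-c)) := by
    refine tendsto_const_nhds.congr' ?_
    filter_upwards [hD, self_mem_nhdsWithin] with δ hδ hpos
    rw [eq_div_iff (ne_of_gt hpos)]
    rw [hD₀] at hδ
    linarith
  exact neg_eq_zero.mp (tendsto_nhds_unique hslope he)

section LipschitzExtension

variable {n : ℕ} {h T t : ℝ} {x y z : ℝ → EuclideanSpace ℝ (Fin n)}

theorem lipExt_affineExt (hx : ContinuousOn x (Icc (-h) T)) (v : EuclideanSpace ℝ (Fin n)) :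
    LipExt n h T t x (affineExt x t v) :=
  ⟨continuousOn_affineExt hx, fun _ hτ => affineExt_of_le hτ.2, ‖v‖₊,
    lipschitzOnWith_affineExt.mono fun _ hτ => hτ.1⟩

theorem LipExt.congr (hz : LipExt n h T t x z) (hxy : ∀ τ ∈ Icc (-h) t, x τ = y τ) :
    LipExt n h T t y z :=
  ⟨hz.1, fun τ hτ => (hz.2.1 τ hτ).trans (hxy τ hτ), hz.2.2⟩

theorem CiDiffAt.exists_affine_increment {φ : ℝ → (ℝ → EuclideanSpace ℝ (Fin n)) → ℝ}
    {a : ℝ} {b v : EuclideanSpace ℝ (Fin n)} (hφ : CiDiffAt n h T φ t x a b)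
    (hz : LipExt n h T t x z) (hzv : ∀ τ ∈ Ioc t T, z τ = x t + (τ - t) • v) :
    ∃ o : ℝ → ℝ, Tendsto (fun δ => o δ / δ) (𝓝[>] 0) (𝓝 0) ∧
      ∀ τ ∈ Ioc t T, φ τ z - φ t x = (a + ⟪b, v⟫) * (τ - t) + o (τ - t) := by
  obtain ⟨o, ho, hlim⟩ := hφ z hz
  refine ⟨o, hlim, fun τ hτ => ?_⟩
  rw [ho τ hτ, hzv τ hτ, add_sub_cancel_left, real_inner_smul_right]
  ring

theorem CiDiffAt.sub_eq_zero_of_agree {φ : ℝ → (ℝ → EuclideanSpace ℝ (Fin n)) → ℝ}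
    {a a' : ℝ} {b b' : EuclideanSpace ℝ (Fin n)} (hdx : CiDiffAt n h T φ t x a b)
    (hdy : CiDiffAt n h T φ t y a' b') (hht : -h ≤ t) (htT : t < T)
    (hx : ContinuousOn x (Icc (-h) T)) (hagree : ∀ τ ∈ Icc (-h) t, x τ = y τ)
    (v : EuclideanSpace ℝ (Fin n)) :
    φ t y - φ t x = 0 ∧ a - a' + ⟪b - b', v⟫ = 0 := by
  have hxy : x t = y t := hagree t ⟨hht, le_rfl⟩
  obtain ⟨o, ho, hox⟩ := hdx.exists_affine_increment (lipExt_affineExt hx v)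
    fun τ hτ => affineExt_of_ge hτ.1.le
  obtain ⟨o', ho', hoy⟩ := hdy.exists_affine_increment ((lipExt_affineExt hx v).congr hagree)
    fun τ hτ => by rw [← hxy]; exact affineExt_of_ge hτ.1.le
  refine eq_zero_of_eventually_eq_mul_add (e := fun δ => o δ - o' δ) ?_ ?_
  · simpa [sub_div] using ho.sub ho'
  · filter_upwards [Ioo_mem_nhdsGT (sub_pos.mpr htT)] with δ hδ
    have hτ : t + δ ∈ Ioc t T := ⟨by linarith [hδ.1], by linarith [hδ.2]⟩
    have ex := hox _ hτ
    have ey := hoy _ hτ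
    rw [add_sub_cancel_left] at ex ey
    rw [inner_sub_left]
    linear_combination ex - ey

end LipschitzExtension

theorem stmt6_general (n : ℕ) (h T : ℝ) (hh : 0 < h)
    (φ : ℝ → (ℝ → EuclideanSpace ℝ (Fin n)) → ℝ)
    (t : ℝ) (ht : t ∈ Set.Ico 0 T)
    (x y : ℝ → EuclideanSpace ℝ (Fin n))
    (hx : ContinuousOn x (Set.Icc (-h) T))
    (hagree : ∀ τ ∈ Set.Icc (-h) t, x τ = y τ)
    (a a' : ℝ) (b b' : EuclideanSpace ℝ (Fin n))
    (hdx : CiDiffAt n h T φ t x a b) (hdy : CiDiffAt n h T φ t y a' b') :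
    φ t x = φ t y ∧ a = a' ∧ b = b' := by
  have key := hdx.sub_eq_zero_of_agree hdy (by linarith [ht.1]) ht.2 hx hagree
  have ha : a = a' := by simpa [sub_eq_zero] using (key 0).2
  refine ⟨(sub_eq_zero.mp (key 0).1).symm, ha, ?_⟩
  have hb := (key (b - b')).2
  rwa [ha, sub_self, zero_add, inner_self_eq_zero, sub_eq_zero] at hb

theorem stmt6 (n : ℕ) (h T : ℝ) (hh : 0 < h) (hT : 0 < T)
    (φ : ℝ → (ℝ → EuclideanSpace ℝ (Fin n)) → ℝ)
    (t : ℝ) (ht : t ∈ Set.Ico 0 T)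
    (x y : ℝ → EuclideanSpace ℝ (Fin n))
    (hx : ContinuousOn x (Set.Icc (-h) T)) (hy : ContinuousOn y (Set.Icc (-h) T))
    (hagree : ∀ τ ∈ Set.Icc (-h) t, x τ = y τ)
    (a a' : ℝ) (b b' : EuclideanSpace ℝ (Fin n))
    (hdx : CiDiffAt n h T φ t x a b) (hdy : CiDiffAt n h T φ t y a' b') :
    φ t x = φ t y ∧ a = a' ∧ b = b' :=
  stmt6_general n h T hh φ t ht x y hx hagree a a' b b' hdx hdy
end
end

section
/- If a functional φ : [0,T] × C([−h,T], ℝⁿ) → ℝ is ci-smooth, then for every (t, x(·)) ∈ [0,T) × C([−h,T],ℝⁿ), every y(·) ∈ Lip(t, x(·)), and every τ ∈ [t, T): φ(τ, y(·)) = φ(t, x(·)) + ∫_t^τ ∂_t φ(ξ, y(·)) dξ + ∫_t^τ ⟨∇φ(ξ, y(·)), ẏ(ξ)⟩ dξ. -/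
noncomputable section

open scoped RealInnerProductSpace

/-- `φ` is ci-smooth with ci-derivatives `pt` and `gr`: it is continuous,
ci-differentiable at every point of `[0,T) × C([-h,T],ℝⁿ)`, and its ci-derivatives
are continuous. -/
def CiSmooth (n : ℕ) (h T : ℝ) (φ pt : ℝ → (ℝ → EuclideanSpace ℝ (Fin n)) → ℝ)
    (gr : ℝ → (ℝ → EuclideanSpace ℝ (Fin n)) → EuclideanSpace ℝ (Fin n)) : Prop :=
  ContWrt n (dst n h T) (Dom n h T) φ ∧
  (∀ t ∈ Set.Ico 0 T, ∀ x : ℝ → EuclideanSpace ℝ (Fin n),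
    ContinuousOn x (Set.Icc (-h) T) → CiDiffAt n h T φ t x (pt t x) (gr t x)) ∧
  ContWrt n (dst n h T) (Dom n h T) pt ∧
  (∀ p ∈ Dom n h T, ∀ ε > 0, ∃ δ > 0, ∀ q ∈ Dom n h T,
    dst n h T p q < δ → ‖gr q.1 q.2 - gr p.1 p.2‖ < ε)

/-!
Fix the path `y` and put `F s = φ(s, y)`. Ci-differentiability at `(ξ, y)`, with `y` as its own
Lipschitz extension, gives `slope F ξ σ = ∂ₜφ(ξ, y) + ⟪∇φ(ξ, y), slope y ξ σ⟫ + o(1)` as `σ ↓ ξ`,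
for every `ξ ∈ [t, T)`. As `y` is Lipschitz and the ci-derivatives are bounded on `[t, τ]`, the
right Dini derivatives of `F` are bounded there, so `F` is Lipschitz, hence absolutely continuous;
wherever both `F` and `y` are differentiable (a.e.), `F' = ∂ₜφ + ⟪∇φ, ẏ⟫`, and the fundamental
theorem of calculus for absolutely continuous functions applies. Finally `φ(t, x) = φ(t, y)`: both
are the right limit of `φ(σ, y)` at `t`, by ci-differentiability at `(t, x)` and by continuity.
-/

open Set Filter Topology MeasureTheory
open scoped NNReal Interval

theorem sub_le_mul_of_eventually_slope_le {f : ℝ → ℝ} {a b C : ℝ} (hab : a ≤ b)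
    (hf : ContinuousOn f (Icc a b))
    (hslope : ∀ x ∈ Ico a b, ∀ᶠ z in 𝓝[>] x, slope f x z ≤ C) :
    f b - f a ≤ C * (b - a) := by
  have hB : ∀ x ∈ Ico a b, HasDerivWithinAt (fun x => f a + C * (x - a)) C (Ici x) x :=
    fun x _ => by simpa using ((((hasDerivAt_id x).sub_const a).const_mul C).const_add
      (f a)).hasDerivWithinAt
  have := image_le_of_liminf_slope_right_le_deriv_boundary hf (by simp) (by fun_prop) hB
    (fun x hx r hr => ((hslope x hx).mono fun z hz => hz.trans_lt hr).frequently)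
    (right_mem_Icc.2 hab)
  linarith

theorem lipschitzOnWith_of_eventually_abs_slope_le {f : ℝ → ℝ} {a b : ℝ} {C : ℝ≥0}
    (hf : ContinuousOn f (Icc a b))
    (hslope : ∀ x ∈ Ico a b, ∀ᶠ z in 𝓝[>] x, |slope f x z| ≤ C) :
    LipschitzOnWith C f (Icc a b) := by
  have hupper : ∀ g : ℝ → ℝ, ContinuousOn g (Icc a b) →
      (∀ x ∈ Ico a b, ∀ᶠ z in 𝓝[>] x, slope g x z ≤ C) →
      ∀ x ∈ Icc a b, ∀ y ∈ Icc a b, y ≤ x → g x ≤ g y + C * dist x y := by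
    intro g hg hgs x hx y hy hyx
    have := sub_le_mul_of_eventually_slope_le hyx (hg.mono (Icc_subset_Icc hy.1 hx.2))
      fun z hz => hgs z (Ico_subset_Ico hy.1 hx.2 hz)
    rw [Real.dist_eq, abs_of_nonneg (sub_nonneg.2 hyx)]
    linarith
  refine LipschitzOnWith.of_le_add_mul C fun x hx y hy => ?_
  rcases le_total y x with hyx | hxy
  · exact hupper f hf (fun z hz => (hslope z hz).mono fun _ h => (le_abs_self _).trans h)
      x hx y hy hyx
  · have := hupper (fun s => -f s) hf.neg
      (fun z hz => (hslope z hz).mono fun _ h => by rw [slope_neg]; exact (neg_le_abs _).trans h)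
      y hy x hx hxy
    rw [dist_comm] at this
    linarith

theorem LipschitzOnWith.norm_slope_le {E : Type*} [NormedAddCommGroup E] [NormedSpace ℝ E]
    {g : ℝ → E} {K : ℝ≥0} {s : Set ℝ} (hg : LipschitzOnWith K g s) {x z : ℝ} (hx : x ∈ s)
    (hz : z ∈ s) : ‖slope g x z‖ ≤ K := by
  rcases eq_or_ne z x with rfl | hzx
  · simp
  have hd : 0 < dist z x := dist_pos.2 hzx
  rw [slope_def_module, norm_smul, norm_inv, Real.norm_eq_abs, ← Real.dist_eq, ← dist_eq_norm,
    inv_mul_le_iff₀ hd, mul_comm]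
  exact hg.dist_le_mul z hz x hx

theorem tendsto_sub_nhdsGT_zero (ξ : ℝ) : Tendsto (fun σ => σ - ξ) (𝓝[>] ξ) (𝓝[>] 0) :=
  tendsto_nhdsWithin_iff.2
    ⟨by simpa using ((continuous_sub_right ξ).tendsto ξ).mono_left nhdsWithin_le_nhds,
      eventually_mem_nhdsWithin.mono fun _ hσ => mem_Ioi.2 (sub_pos.2 hσ)⟩

theorem tendsto_zero_of_tendsto_div_self {o : ℝ → ℝ}
    (ho : Tendsto (fun δ => o δ / δ) (𝓝[>] 0) (𝓝 0)) : Tendsto o (𝓝[>] 0) (𝓝 0) := by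
  have := ho.mul (tendsto_nhdsWithin_of_tendsto_nhds tendsto_id)
  rw [zero_mul] at this
  refine this.congr' (eventually_mem_nhdsWithin.mono fun δ hδ => ?_)
  exact div_mul_cancel₀ _ (ne_of_gt hδ)

section Expansion

variable {E : Type*} [NormedAddCommGroup E] [InnerProductSpace ℝ E]

theorem tendsto_of_expansion {c : ℝ → ℝ} {c₀ a ξ T : ℝ} {g : ℝ → E} {g₀ b : E} {o : ℝ → ℝ}
    (hξ : ξ < T) (hexp : ∀ σ ∈ Ioc ξ T, c σ - c₀ = a * (σ - ξ) + ⟪b, g σ - g₀⟫ + o (σ - ξ))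
    (ho : Tendsto (fun δ => o δ / δ) (𝓝[>] 0) (𝓝 0)) (hg : Tendsto g (𝓝[>] ξ) (𝓝 g₀)) :
    Tendsto c (𝓝[>] ξ) (𝓝 c₀) := by
  have hshift := tendsto_sub_nhdsGT_zero ξ
  have hrhs : Tendsto (fun σ => a * (σ - ξ) + ⟪b, g σ - g₀⟫ + o (σ - ξ)) (𝓝[>] ξ) (𝓝 0) := by
    have h1 := (tendsto_const_nhds (x := a)).mul (hshift.mono_right nhdsWithin_le_nhds)
    have h2 := Tendsto.inner (𝕜 := ℝ) (tendsto_const_nhds (x := b)) (hg.sub_const g₀)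
    have h3 := (tendsto_zero_of_tendsto_div_self ho).comp hshift
    simpa using (h1.add h2).add h3
  have := hrhs.add_const c₀
  rw [zero_add] at this
  refine this.congr' ?_
  filter_upwards [Ioc_mem_nhdsGT hξ] with σ hσ
  rw [← hexp σ hσ, sub_add_cancel]

theorem tendsto_slope_sub_of_expansion {F : ℝ → ℝ} {a ξ T : ℝ} {g : ℝ → E} {b : E} {o : ℝ → ℝ}
    (hξ : ξ < T) (hexp : ∀ σ ∈ Ioc ξ T, F σ - F ξ = a * (σ - ξ) + ⟪b, g σ - g ξ⟫ + o (σ - ξ))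
    (ho : Tendsto (fun δ => o δ / δ) (𝓝[>] 0) (𝓝 0)) :
    Tendsto (fun σ => slope F ξ σ - (a + ⟪b, slope g ξ σ⟫)) (𝓝[>] ξ) (𝓝 0) := by
  refine (ho.comp (tendsto_sub_nhdsGT_zero ξ)).congr' ?_
  filter_upwards [Ioc_mem_nhdsGT hξ] with σ hσ
  have hσξ : σ - ξ ≠ 0 := sub_ne_zero.2 (ne_of_gt hσ.1)
  simp only [Function.comp_apply, slope_def_field, slope_def_module, inner_smul_right, hexp σ hσ]
  field_simp
  ring

theorem deriv_eq_of_tendsto_slope_sub {F : ℝ → ℝ} {a ξ : ℝ} {g : ℝ → E} {b : E}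
    (hF : DifferentiableAt ℝ F ξ) (hg : DifferentiableAt ℝ g ξ)
    (hslope : Tendsto (fun σ => slope F ξ σ - (a + ⟪b, slope g ξ σ⟫)) (𝓝[>] ξ) (𝓝 0)) :
    deriv F ξ = a + ⟪b, deriv g ξ⟫ := by
  have hF' := (hasDerivWithinAt_iff_tendsto_slope' (s := Ioi ξ) (lt_irrefl ξ)).1
    hF.hasDerivAt.hasDerivWithinAt
  have hg' := (hasDerivWithinAt_iff_tendsto_slope' (s := Ioi ξ) (lt_irrefl ξ)).1
    hg.hasDerivAt.hasDerivWithinAt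
  have hlim := hF'.sub ((tendsto_const_nhds (x := a)).add
    (Tendsto.inner (𝕜 := ℝ) (tendsto_const_nhds (x := b)) hg'))
  exact sub_eq_zero.1 (tendsto_nhds_unique hlim hslope)

theorem eventually_abs_slope_le {F : ℝ → ℝ} {a c d ξ : ℝ} {g : ℝ → E} {b : E} {K : ℝ≥0}
    (hξ : ξ ∈ Ico c d) (hg : LipschitzOnWith K g (Icc c d))
    (hslope : Tendsto (fun σ => slope F ξ σ - (a + ⟪b, slope g ξ σ⟫)) (𝓝[>] ξ) (𝓝 0)) :
    ∀ᶠ σ in 𝓝[>] ξ, |slope F ξ σ| ≤ |a| + ‖b‖ * K + 1 := by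
  filter_upwards [Ioc_mem_nhdsGT hξ.2, Metric.tendsto_nhds.1 hslope 1 one_pos] with σ hσ hsmall
  rw [Real.dist_eq, sub_zero] at hsmall
  have hgσ : ‖slope g ξ σ‖ ≤ K :=
    hg.norm_slope_le (Ico_subset_Icc_self hξ) ⟨hξ.1.trans hσ.1.le, hσ.2⟩
  have hinner : |⟪b, slope g ξ σ⟫| ≤ ‖b‖ * K :=
    (abs_real_inner_le_norm _ _).trans (mul_le_mul_of_nonneg_left hgσ (norm_nonneg b))
  calc |slope F ξ σ|
      = |(slope F ξ σ - (a + ⟪b, slope g ξ σ⟫)) + a + ⟪b, slope g ξ σ⟫| := by ring_nf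
    _ ≤ |slope F ξ σ - (a + ⟪b, slope g ξ σ⟫)| + |a| + |⟪b, slope g ξ σ⟫| := abs_add_three _ _ _
    _ ≤ |a| + ‖b‖ * K + 1 := by linarith

theorem eq_add_integral_add_integral_inner_deriv [FiniteDimensional ℝ E] {F α : ℝ → ℝ}
    {β g : ℝ → E} {K : ℝ≥0} {a b : ℝ} (hab : a ≤ b) (hF : ContinuousOn F (Icc a b))
    (hα : ContinuousOn α (Icc a b)) (hβ : ContinuousOn β (Icc a b))
    (hg : LipschitzOnWith K g (Icc a b))
    (hslope : ∀ ξ ∈ Ico a b,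
      Tendsto (fun σ => slope F ξ σ - (α ξ + ⟪β ξ, slope g ξ σ⟫)) (𝓝[>] ξ) (𝓝 0)) :
    F b = F a + (∫ ξ in a..b, α ξ) + ∫ ξ in a..b, ⟪β ξ, deriv g ξ⟫ := by
  obtain ⟨Mα, hMα⟩ := isCompact_Icc.exists_bound_of_continuousOn hα
  obtain ⟨Mβ, hMβ⟩ := isCompact_Icc.exists_bound_of_continuousOn hβ
  have hFlip : LipschitzOnWith (Mα + Mβ * K + 1).toNNReal F (uIcc a b) := by
    rw [uIcc_of_le hab]
    refine lipschitzOnWith_of_eventually_abs_slope_le hF fun ξ hξ =>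
      (eventually_abs_slope_le hξ hg (hslope ξ hξ)).mono fun σ hσ => hσ.trans ?_
    have hξ' := Ico_subset_Icc_self hξ
    have := hMα ξ hξ'
    rw [Real.norm_eq_abs] at this
    grw [this, hMβ ξ hξ']
    exact Real.le_coe_toNNReal _
  have hFac := hFlip.absolutelyContinuousOnInterval
  have hgac : AbsolutelyContinuousOnInterval g a b := by
    rw [← uIcc_of_le hab] at hg
    exact hg.absolutelyContinuousOnInterval
  have hne : ∀ᵐ ξ, ξ ≠ b := by simp [ae_iff, measure_singleton]
  have hderiv : ∀ᵐ ξ, ξ ∈ Ι a b → deriv F ξ - α ξ = ⟪β ξ, deriv g ξ⟫ := by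
    filter_upwards [hFac.ae_differentiableAt,
      hgac.boundedVariationOn.ae_differentiableAt_of_mem_uIcc, hne] with ξ hFd hgd hξb hξ
    have hξ' := uIoc_subset_uIcc hξ
    rw [uIoc_of_le hab] at hξ
    rw [deriv_eq_of_tendsto_slope_sub (hFd hξ') (hgd hξ')
      (hslope ξ ⟨hξ.1.le, lt_of_le_of_ne hξ.2 hξb⟩), add_sub_cancel_left]
  have hintegral : ∫ ξ in a..b, ⟪β ξ, deriv g ξ⟫ = F b - F a - ∫ ξ in a..b, α ξ := by
    rw [← intervalIntegral.integral_congr_ae hderiv, intervalIntegral.integral_sub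
      hFac.intervalIntegrable_deriv (hα.intervalIntegrable_of_Icc hab), hFac.integral_deriv_eq_sub]
  rw [hintegral]
  ring

end Expansion

section CiSmooth

variable {n : ℕ} {h T : ℝ}

theorem dst_same_path (s s' : ℝ) (y : ℝ → EuclideanSpace ℝ (Fin n)) :
    dst n h T (s, y) (s', y) = |s - s'| := by
  suffices unifNorm n h T (fun _ => 0) = 0 by simp [dst, this]
  simp only [unifNorm, norm_zero]
  rcases (Icc (-h) T).eq_empty_or_nonempty with hempty | hne
  · simp [hempty]
  · rw [hne.image_const, csSup_singleton]

theorem continuousOn_time_of_dst {X : Type*} [PseudoMetricSpace X]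
    {ψ : ℝ → (ℝ → EuclideanSpace ℝ (Fin n)) → X}
    (hψ : ∀ p ∈ Dom n h T, ∀ ε > 0, ∃ δ > 0, ∀ q ∈ Dom n h T,
      dst n h T p q < δ → dist (ψ q.1 q.2) (ψ p.1 p.2) < ε)
    {y : ℝ → EuclideanSpace ℝ (Fin n)} (hy : ContinuousOn y (Icc (-h) T)) :
    ContinuousOn (fun s => ψ s y) (Icc 0 T) := by
  intro s hs
  rw [Metric.continuousWithinAt_iff]
  intro ε hε
  obtain ⟨δ, hδ, hq⟩ := hψ (s, y) ⟨hs, hy⟩ ε hε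
  refine ⟨δ, hδ, fun s' hs' hss' => hq (s', y) ⟨hs', hy⟩ ?_⟩
  rwa [dst_same_path, abs_sub_comm]

theorem ContWrt.continuousOn_time {ψ : ℝ → (ℝ → EuclideanSpace ℝ (Fin n)) → ℝ}
    (hψ : ContWrt n (dst n h T) (Dom n h T) ψ) {y : ℝ → EuclideanSpace ℝ (Fin n)}
    (hy : ContinuousOn y (Icc (-h) T)) : ContinuousOn (fun s => ψ s y) (Icc 0 T) :=
  continuousOn_time_of_dst (fun p hp ε hε => by simpa only [Real.dist_eq] using hψ p hp ε hε) hy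

variable {φ pt : ℝ → (ℝ → EuclideanSpace ℝ (Fin n)) → ℝ}
  {gr : ℝ → (ℝ → EuclideanSpace ℝ (Fin n)) → EuclideanSpace ℝ (Fin n)}
  {y : ℝ → EuclideanSpace ℝ (Fin n)}

theorem CiSmooth.continuousOn_gr_time (hsm : CiSmooth n h T φ pt gr)
    (hy : ContinuousOn y (Icc (-h) T)) : ContinuousOn (fun s => gr s y) (Icc 0 T) :=
  continuousOn_time_of_dst
    (fun p hp ε hε => by simpa only [dist_eq_norm] using hsm.2.2.2 p hp ε hε) hy

theorem CiSmooth.tendsto_slope_sub (hsm : CiSmooth n h T φ pt gr) {ξ : ℝ} (hξ : ξ ∈ Ico 0 T)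
    (hy : ContinuousOn y (Icc (-h) T)) {K : ℝ≥0} (hyK : LipschitzOnWith K y (Icc ξ T)) :
    Tendsto (fun σ => slope (fun s => φ s y) ξ σ - (pt ξ y + ⟪gr ξ y, slope y ξ σ⟫))
      (𝓝[>] ξ) (𝓝 0) := by
  -- ci-differentiability at `(ξ, y)`, tested on `y` as its own Lipschitz extension
  obtain ⟨o, hexp, ho⟩ := hsm.2.1 ξ hξ y hy y ⟨hy, fun _ _ => rfl, K, hyK⟩
  exact tendsto_slope_sub_of_expansion hξ.2 hexp ho

theorem CiSmooth.apply_eq_of_lipExt (hsm : CiSmooth n h T φ pt gr) (hh : 0 < h) {t : ℝ}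
    (ht : t ∈ Ico 0 T) {x : ℝ → EuclideanSpace ℝ (Fin n)} (hx : ContinuousOn x (Icc (-h) T))
    (hy : LipExt n h T t x y) : φ t x = φ t y := by
  obtain ⟨o, hexp, ho⟩ := hsm.2.1 t ht x hx y hy
  obtain ⟨hyc, hyx, K, hyK⟩ := hy
  have hIcc : Icc t T ∈ 𝓝[>] t := mem_of_superset (Ioc_mem_nhdsGT ht.2) Ioc_subset_Icc_self
  have hyt : Tendsto y (𝓝[>] t) (𝓝 (x t)) := by
    rw [← hyx t ⟨by linarith [ht.1], le_rfl⟩]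
    exact (hyK.continuousOn t (left_mem_Icc.2 ht.2.le)).mono_of_mem_nhdsWithin hIcc
  have hlim_x : Tendsto (fun σ => φ σ y) (𝓝[>] t) (𝓝 (φ t x)) :=
    tendsto_of_expansion ht.2 hexp ho hyt
  have hlim_y : Tendsto (fun σ => φ σ y) (𝓝[>] t) (𝓝 (φ t y)) :=
    (hsm.1.continuousOn_time hyc t (Ico_subset_Icc_self ht)).mono_of_mem_nhdsWithin
      (mem_of_superset hIcc (Icc_subset_Icc ht.1 le_rfl))
  exact tendsto_nhds_unique hlim_x hlim_y

end CiSmooth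

theorem stmt7_general (n : ℕ) (h T : ℝ) (hh : 0 < h)
    (φ pt : ℝ → (ℝ → EuclideanSpace ℝ (Fin n)) → ℝ)
    (gr : ℝ → (ℝ → EuclideanSpace ℝ (Fin n)) → EuclideanSpace ℝ (Fin n))
    (hsm : CiSmooth n h T φ pt gr)
    (t : ℝ) (ht : t ∈ Set.Ico 0 T)
    (x y : ℝ → EuclideanSpace ℝ (Fin n))
    (hx : ContinuousOn x (Set.Icc (-h) T)) (hy : LipExt n h T t x y)
    (τ : ℝ) (hτ : τ ∈ Set.Ico t T) :
    φ τ y = φ t x + (∫ ξ in t..τ, pt ξ y) + ∫ ξ in t..τ, ⟪gr ξ y, deriv y ξ⟫ := by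
  rw [hsm.apply_eq_of_lipExt hh ht hx hy]
  obtain ⟨hyc, -, K, hyK⟩ := hy
  have hsub : Icc t τ ⊆ Icc 0 T := Icc_subset_Icc ht.1 hτ.2.le
  exact eq_add_integral_add_integral_inner_deriv hτ.1
    ((hsm.1.continuousOn_time hyc).mono hsub) ((hsm.2.2.1.continuousOn_time hyc).mono hsub)
    ((hsm.continuousOn_gr_time hyc).mono hsub) (hyK.mono (Icc_subset_Icc le_rfl hτ.2.le))
    fun ξ hξ => hsm.tendsto_slope_sub ⟨ht.1.trans hξ.1, hξ.2.trans hτ.2⟩ hyc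
      (hyK.mono (Icc_subset_Icc hξ.1 le_rfl))

theorem stmt7 (n : ℕ) (h T : ℝ) (hh : 0 < h) (hT : 0 < T)
    (φ pt : ℝ → (ℝ → EuclideanSpace ℝ (Fin n)) → ℝ)
    (gr : ℝ → (ℝ → EuclideanSpace ℝ (Fin n)) → EuclideanSpace ℝ (Fin n))
    (hsm : CiSmooth n h T φ pt gr)
    (t : ℝ) (ht : t ∈ Set.Ico 0 T)
    (x y : ℝ → EuclideanSpace ℝ (Fin n))
    (hx : ContinuousOn x (Set.Icc (-h) T)) (hy : LipExt n h T t x y)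
    (τ : ℝ) (hτ : τ ∈ Set.Ico t T) :
    φ τ y = φ t x + (∫ ξ in t..τ, pt ξ y) + ∫ ξ in t..τ, ⟪gr ξ y, deriv y ξ⟫ :=
  stmt7_general n h T hh φ pt gr hsm t ht x y hx hy τ hτ
end
end

section
/- The functional V(t, x(·)) satisfies the ci-differentiability property with ∂_t V(t, x(·)) = 0 and ∇V(t, x(·)) as given: for every (t, x(·)) ∈ [0,T) × C([−h,T], ℝⁿ) with max_{τ∈[−h,t]}‖x(τ)‖ > 0 and every Lipschitz extension y(·) ∈ Lip(t, x(·)), one has V(τ, y(·)) − V(t, x(·)) = ⟨∇V(t, x(·)), y(τ) − x(t)⟩ + o(τ − t) as τ ↓ t, where ∇V(t, x(·)) = (2 − 4(M² − ‖x(t)‖²)/M²)·x(t) with M = max_{τ∈[−h,t]}‖x(τ)‖. -/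
noncomputable section

open scoped RealInnerProductSpace

/-- Running maximum of the Euclidean norm of the path `x` over `[-h, t]`. -/
def runMax (n : ℕ) (h t : ℝ) (x : ℝ → EuclideanSpace ℝ (Fin n)) : ℝ :=
  sSup ((fun τ => ‖x τ‖) '' Set.Icc (-h) t)

/-- The Lyapunov–Krasovskii functional `V`. -/
def Vfun (n : ℕ) (h t : ℝ) (x : ℝ → EuclideanSpace ℝ (Fin n)) : ℝ :=
  if 0 < runMax n h t x then
    ((runMax n h t x) ^ 2 - ‖x t‖ ^ 2) ^ 2 / (runMax n h t x) ^ 2 + ‖x t‖ ^ 2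
  else 0

/-- The candidate gradient `∇V`. -/
def gradV (n : ℕ) (h t : ℝ) (x : ℝ → EuclideanSpace ℝ (Fin n)) :
    EuclideanSpace ℝ (Fin n) :=
  if 0 < runMax n h t x then
    (2 - 4 * ((runMax n h t x) ^ 2 - ‖x t‖ ^ 2) / (runMax n h t x) ^ 2) • x t
  else 0

/-!
Let `M` be the running maximum at time `t` and `a = y t`. If `‖a‖ < M`, the running maximum
of `y` stays equal to `M` for a short while, so near `t` the functional is the smooth function
`v ↦ (M² - ‖v‖²)² / M² + ‖v‖²` of `y τ`, whose gradient at `a` is `∇V`; the remainder is then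
quadratic in `‖y τ - a‖ = O(τ - t)`. If `‖a‖ = M`, then `∇V = 2a` and the remainder is
`(M_τ² - ‖y τ‖²)² / M_τ² + ‖y τ - a‖²`, which is `O((τ - t)²)` because the Lipschitz bound keeps
both the new running maximum `M_τ` and `‖y τ‖` within `K (τ - t)` of `M`.
-/

open Filter Topology Asymptotics Set

section Profile

variable {E : Type*} [NormedAddCommGroup E] [InnerProductSpace ℝ E] {M : ℝ}

def lyapProfile (M : ℝ) (v : E) : ℝ := (M ^ 2 - ‖v‖ ^ 2) ^ 2 / M ^ 2 + ‖v‖ ^ 2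

def lyapProfileGrad (M : ℝ) (a : E) : E := (2 - 4 * (M ^ 2 - ‖a‖ ^ 2) / M ^ 2) • a

lemma lyapProfile_add_sub (hM : M ≠ 0) (a e : E) :
    lyapProfile M (a + e) - lyapProfile M a - ⟪lyapProfileGrad M a, e⟫ =
      (2 * ‖a‖ ^ 2 / M ^ 2 - 1) * ‖e‖ ^ 2 + (2 * ⟪a, e⟫ + ‖e‖ ^ 2) ^ 2 / M ^ 2 := by
  simp only [lyapProfile, lyapProfileGrad, real_inner_smul_left, norm_add_sq_real]
  field_simp
  ring

lemma lyapProfile_add_sub_of_norm_eq (hM : M ≠ 0) {a : E} (ha : ‖a‖ = M) (M' : ℝ) (e : E) :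
    lyapProfile M' (a + e) - lyapProfile M a - ⟪lyapProfileGrad M a, e⟫ =
      (M' ^ 2 - ‖a + e‖ ^ 2) ^ 2 / M' ^ 2 + ‖e‖ ^ 2 := by
  simp only [lyapProfile, lyapProfileGrad, real_inner_smul_left, ha]
  rw [norm_add_sq_real, ha]
  field_simp
  ring

end Profile

lemma sq_sub_sq_sq_div_sq_le {M N : ℝ} (hN : 0 ≤ N) (hNM : N ≤ M) :
    (M ^ 2 - N ^ 2) ^ 2 / M ^ 2 ≤ 4 * (M - N) ^ 2 := by
  rcases (hN.trans hNM).eq_or_lt with rfl | hM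
  · simp only [ne_eq, OfNat.ofNat_ne_zero, not_false_eq_true, zero_pow, div_zero]; positivity
  rw [div_le_iff₀ (by positivity)]
  have : (M + N) ^ 2 ≤ (2 * M) ^ 2 := pow_le_pow_left₀ (by linarith) (by linarith) 2
  calc (M ^ 2 - N ^ 2) ^ 2 = (M - N) ^ 2 * (M + N) ^ 2 := by ring
    _ ≤ (M - N) ^ 2 * (2 * M) ^ 2 := by gcongr
    _ = 4 * (M - N) ^ 2 * M ^ 2 := by ring

lemma tendsto_div_nhdsGT_zero_of_isBigO_sq {f : ℝ → ℝ} (hf : f =O[𝓝[>] 0] fun δ => δ ^ 2) :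
    Tendsto (fun δ => f δ / δ) (𝓝[>] 0) (𝓝 0) :=
  (hf.trans_isLittleO
    ((isLittleO_pow_id one_lt_two).mono nhdsWithin_le_nhds)).tendsto_div_nhds_zero

lemma LipschitzOnWith.norm_sub_le_mul_sub {E : Type*} [SeminormedAddCommGroup E] {f : ℝ → E}
    {K : NNReal} {s t : ℝ} (hf : LipschitzOnWith K f (Icc s t)) (hst : s ≤ t) :
    ‖f t - f s‖ ≤ K * (t - s) := by
  simpa [← dist_eq_norm, Real.dist_eq, abs_of_nonneg (sub_nonneg.2 hst)] using
    hf.dist_le_mul t ⟨hst, le_rfl⟩ s ⟨le_rfl, hst⟩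

section RunningMax

variable {n : ℕ} {h T t τ : ℝ} {x y : ℝ → EuclideanSpace ℝ (Fin n)} {K : NNReal}

lemma runMax_congr (hxy : EqOn x y (Icc (-h) t)) : runMax n h t x = runMax n h t y := by
  rw [runMax, runMax, image_congr fun τ hτ => by rw [hxy hτ]]

lemma bddAbove_norm_image (hy : ContinuousOn y (Icc (-h) T)) (htT : t ≤ T) :
    BddAbove ((fun τ => ‖y τ‖) '' Icc (-h) t) :=
  (isCompact_Icc.image_of_continuousOn hy.norm).bddAbove.mono
    (image_mono (Icc_subset_Icc le_rfl htT))

lemma norm_le_runMax (hy : ContinuousOn y (Icc (-h) T)) (htT : t ≤ T) (hτ : τ ∈ Icc (-h) t) :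
    ‖y τ‖ ≤ runMax n h t y :=
  le_csSup (bddAbove_norm_image hy htT) (mem_image_of_mem _ hτ)

lemma runMax_mono (hy : ContinuousOn y (Icc (-h) T)) (ht : -h ≤ t) (htτ : t ≤ τ) (hτT : τ ≤ T) :
    runMax n h t y ≤ runMax n h τ y :=
  csSup_le_csSup (bddAbove_norm_image hy hτT) ((nonempty_Icc.2 ht).image _)
    (image_mono (Icc_subset_Icc le_rfl htτ))

lemma runMax_le_max (hy : ContinuousOn y (Icc (-h) T)) (hK : LipschitzOnWith K y (Icc t τ))
    (ht : -h ≤ t) (htτ : t ≤ τ) (hτT : τ ≤ T) :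
    runMax n h τ y ≤ max (runMax n h t y) (‖y t‖ + K * (τ - t)) := by
  refine csSup_le ((nonempty_Icc.2 (ht.trans htτ)).image _) ?_
  rintro _ ⟨s, hs, rfl⟩
  rcases le_or_gt s t with hst | hts
  · exact le_max_of_le_left (norm_le_runMax hy (htτ.trans hτT) ⟨hs.1, hst⟩)
  · have hys := (hK.mono (Icc_subset_Icc le_rfl hs.2)).norm_sub_le_mul_sub hts.le
    have : (K : ℝ) * (s - t) ≤ K * (τ - t) := by gcongr; exact hs.2
    refine le_max_of_le_right ?_
    calc ‖y s‖ ≤ ‖y t‖ + ‖y s - y t‖ := norm_le_norm_add_norm_sub' _ _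
      _ ≤ ‖y t‖ + K * (τ - t) := by linarith

end RunningMax

section Remainder

variable {n : ℕ} {h T t : ℝ} {x y : ℝ → EuclideanSpace ℝ (Fin n)} {K : NNReal}

lemma Vfun_congr (hxy : EqOn x y (Icc (-h) t)) (ht : -h ≤ t) : Vfun n h t x = Vfun n h t y := by
  rw [Vfun, Vfun, runMax_congr hxy, hxy ⟨ht, le_rfl⟩]

lemma gradV_congr (hxy : EqOn x y (Icc (-h) t)) (ht : -h ≤ t) : gradV n h t x = gradV n h t y := by
  rw [gradV, gradV, runMax_congr hxy, hxy ⟨ht, le_rfl⟩]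

lemma Vfun_eq_lyapProfile (hM : 0 < runMax n h t y) :
    Vfun n h t y = lyapProfile (runMax n h t y) (y t) :=
  if_pos hM

lemma gradV_eq_lyapProfileGrad (hM : 0 < runMax n h t y) :
    gradV n h t y = lyapProfileGrad (runMax n h t y) (y t) :=
  if_pos hM

def ciRemainder (n : ℕ) (h t : ℝ) (y : ℝ → EuclideanSpace ℝ (Fin n)) (δ : ℝ) : ℝ :=
  Vfun n h (t + δ) y - Vfun n h t y - ⟪gradV n h t y, y (t + δ) - y t⟫

lemma isBigO_norm_sub_of_lipschitzOnWith (hK : LipschitzOnWith K y (Icc t T)) (htT : t < T) :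
    (fun δ => ‖y (t + δ) - y t‖) =O[𝓝[>] 0] fun δ => δ := by
  refine IsBigO.of_bound K ?_
  filter_upwards [Ioo_mem_nhdsGT (sub_pos.2 htT)] with δ hδ
  rw [norm_norm, Real.norm_of_nonneg hδ.1.le]
  simpa using (hK.mono (Icc_subset_Icc le_rfl (by linarith [hδ.2]))).norm_sub_le_mul_sub
    (by linarith [hδ.1] : t ≤ t + δ)

lemma runMax_eventually_eq (hy : ContinuousOn y (Icc (-h) T))
    (hK : LipschitzOnWith K y (Icc t T)) (ht : -h ≤ t) (htT : t < T)
    (hlt : ‖y t‖ < runMax n h t y) :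
    ∀ᶠ δ in 𝓝[>] 0, runMax n h (t + δ) y = runMax n h t y := by
  have hsmall : ∀ᶠ δ in 𝓝[>] (0 : ℝ), ‖y t‖ + K * δ < runMax n h t y := by
    have : Tendsto (fun δ : ℝ => ‖y t‖ + K * δ) (𝓝[>] 0) (𝓝 (‖y t‖ + K * 0)) :=
      (tendsto_const_nhds.add (tendsto_id.const_mul _)).mono_left nhdsWithin_le_nhds
    exact this.eventually (gt_mem_nhds (by simpa using hlt))
  filter_upwards [Ioo_mem_nhdsGT (sub_pos.2 htT), hsmall] with δ hδ hδK
  have hδT : t + δ ≤ T := by linarith [hδ.2]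
  refine le_antisymm ?_ (runMax_mono hy ht (by linarith [hδ.1]) hδT)
  have := runMax_le_max hy (hK.mono (Icc_subset_Icc le_rfl hδT)) ht (by linarith [hδ.1]) hδT
  rw [add_sub_cancel_left] at this
  exact this.trans (max_le le_rfl hδK.le)

lemma ciRemainder_isBigO_of_norm_lt (hy : ContinuousOn y (Icc (-h) T))
    (hK : LipschitzOnWith K y (Icc t T)) (ht : -h ≤ t) (htT : t < T)
    (hM : 0 < runMax n h t y) (hlt : ‖y t‖ < runMax n h t y) :
    ciRemainder n h t y =O[𝓝[>] 0] fun δ => δ ^ 2 := by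
  set M := runMax n h t y
  set e := fun δ => y (t + δ) - y t
  have he : (fun δ => ‖e δ‖) =O[𝓝[>] 0] fun δ => δ := isBigO_norm_sub_of_lipschitzOnWith hK htT
  have he2 : (fun δ => ‖e δ‖ ^ 2) =O[𝓝[>] 0] fun δ => δ ^ 2 := he.pow 2
  have hinner : (fun δ => ⟪y t, e δ⟫) =O[𝓝[>] 0] fun δ => δ :=
    (IsBigO.of_bound ‖y t‖ (Eventually.of_forall fun δ => by
      simpa using abs_real_inner_le_norm (y t) (e δ))).trans he
  have hd : (fun δ => 2 * ⟪y t, e δ⟫ + ‖e δ‖ ^ 2) =O[𝓝[>] 0] fun δ => δ :=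
    (hinner.const_mul_left 2).add
      (he2.trans ((isLittleO_pow_id one_lt_two).isBigO.mono nhdsWithin_le_nhds))
  have hexp : (fun δ => (2 * ‖y t‖ ^ 2 / M ^ 2 - 1) * ‖e δ‖ ^ 2 +
      (M ^ 2)⁻¹ * (2 * ⟪y t, e δ⟫ + ‖e δ‖ ^ 2) ^ 2) =ᶠ[𝓝[>] 0] ciRemainder n h t y := by
    filter_upwards [runMax_eventually_eq hy hK ht htT hlt] with δ hδ
    have := lyapProfile_add_sub hM.ne' (y t) (e δ)
    rw [add_sub_cancel] at this
    rw [ciRemainder, Vfun_eq_lyapProfile (hδ ▸ hM), Vfun_eq_lyapProfile hM,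
      gradV_eq_lyapProfileGrad hM, hδ, this, inv_mul_eq_div]
  exact ((he2.const_mul_left _).add ((hd.pow 2).const_mul_left _)).congr' hexp
    EventuallyEq.rfl

lemma ciRemainder_isBigO_of_norm_eq (hy : ContinuousOn y (Icc (-h) T))
    (hK : LipschitzOnWith K y (Icc t T)) (ht : -h ≤ t) (htT : t < T)
    (hM : 0 < runMax n h t y) (heq : ‖y t‖ = runMax n h t y) :
    ciRemainder n h t y =O[𝓝[>] 0] fun δ => δ ^ 2 := by
  refine IsBigO.of_bound (17 * K ^ 2) ?_
  filter_upwards [Ioo_mem_nhdsGT (sub_pos.2 htT)] with δ hδ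
  have htδ : t ≤ t + δ := by linarith [hδ.1]
  have hδT : t + δ ≤ T := by linarith [hδ.2]
  have hK' := hK.mono (Icc_subset_Icc le_rfl hδT)
  set M := runMax n h t y
  set M' := runMax n h (t + δ) y
  set N := ‖y (t + δ)‖
  have hMM' : M ≤ M' := runMax_mono hy ht htδ hδT
  have hM' : M' ≤ M + K * δ := by
    have := runMax_le_max hy hK' ht htδ hδT
    rwa [add_sub_cancel_left, heq,
      max_eq_right (le_add_of_nonneg_right (mul_nonneg K.coe_nonneg hδ.1.le))] at this
  have he : ‖y (t + δ) - y t‖ ≤ K * δ := by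
    simpa using hK'.norm_sub_le_mul_sub htδ
  have hNM' : N ≤ M' := norm_le_runMax hy hδT ⟨ht.trans htδ, le_rfl⟩
  have hMN : M - K * δ ≤ N := by
    have := norm_le_norm_add_norm_sub' (y t) (y (t + δ))
    rw [norm_sub_rev] at this
    linarith
  have hrem : ciRemainder n h t y δ = (M' ^ 2 - N ^ 2) ^ 2 / M' ^ 2 + ‖y (t + δ) - y t‖ ^ 2 := by
    have := lyapProfile_add_sub_of_norm_eq hM.ne' heq M' (y (t + δ) - y t)
    rw [add_sub_cancel] at this
    rw [ciRemainder, Vfun_eq_lyapProfile (hM.trans_le hMM'), Vfun_eq_lyapProfile hM,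
      gradV_eq_lyapProfileGrad hM, this]
  have h1 := sq_sub_sq_sq_div_sq_le (norm_nonneg _) hNM'
  have h2 : (M' - N) ^ 2 ≤ (2 * K * δ) ^ 2 := pow_le_pow_left₀ (by linarith) (by linarith) 2
  have h3 : ‖y (t + δ) - y t‖ ^ 2 ≤ (K * δ) ^ 2 := pow_le_pow_left₀ (norm_nonneg _) he 2
  rw [hrem, Real.norm_of_nonneg (by positivity), norm_pow, Real.norm_of_nonneg hδ.1.le]
  nlinarith

lemma ciRemainder_isBigO (hy : ContinuousOn y (Icc (-h) T))
    (hK : LipschitzOnWith K y (Icc t T)) (ht : -h ≤ t) (htT : t < T)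
    (hM : 0 < runMax n h t y) :
    ciRemainder n h t y =O[𝓝[>] 0] fun δ => δ ^ 2 := by
  rcases (norm_le_runMax hy htT.le ⟨ht, le_rfl⟩).eq_or_lt with heq | hlt
  · exact ciRemainder_isBigO_of_norm_eq hy hK ht htT hM heq
  · exact ciRemainder_isBigO_of_norm_lt hy hK ht htT hM hlt

end Remainder

theorem stmt9_general (n : ℕ) (h T : ℝ) (hh : 0 < h)
    (t : ℝ) (ht : t ∈ Set.Ico 0 T)
    (x : ℝ → EuclideanSpace ℝ (Fin n))
    (hM : 0 < runMax n h t x)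
    (y : ℝ → EuclideanSpace ℝ (Fin n)) (hy : LipExt n h T t x y) :
    ∃ o : ℝ → ℝ,
      (∀ τ ∈ Set.Ioc t T,
        Vfun n h τ y - Vfun n h t x = ⟪gradV n h t x, y τ - x t⟫ + o (τ - t)) ∧
      Filter.Tendsto (fun δ => o δ / δ) (nhdsWithin 0 (Set.Ioi 0)) (nhds 0) := by
  obtain ⟨hyc, hxy, K, hK⟩ := hy
  have hht : -h ≤ t := by linarith [ht.1]
  have hxy' : EqOn x y (Icc (-h) t) := fun τ hτ => (hxy τ hτ).symm
  refine ⟨ciRemainder n h t y, fun τ _ => ?_, tendsto_div_nhdsGT_zero_of_isBigO_sq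
    (ciRemainder_isBigO hyc hK hht ht.2 (runMax_congr hxy' ▸ hM))⟩
  rw [ciRemainder, add_sub_cancel, Vfun_congr hxy' hht, gradV_congr hxy' hht, hxy' ⟨hht, le_rfl⟩]
  ring

theorem stmt9 (n : ℕ) (h T : ℝ) (hh : 0 < h) (hT : 0 < T)
    (t : ℝ) (ht : t ∈ Set.Ico 0 T)
    (x : ℝ → EuclideanSpace ℝ (Fin n)) (hx : ContinuousOn x (Set.Icc (-h) T))
    (hM : 0 < runMax n h t x)
    (y : ℝ → EuclideanSpace ℝ (Fin n)) (hy : LipExt n h T t x y) :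
    ∃ o : ℝ → ℝ,
      (∀ τ ∈ Set.Ioc t T,
        Vfun n h τ y - Vfun n h t x = ⟪gradV n h t x, y τ - x t⟫ + o (τ - t)) ∧
      Filter.Tendsto (fun δ => o δ / δ) (nhdsWithin 0 (Set.Ioi 0)) (nhds 0) :=
  stmt9_general n h T hh t ht x hM y hy
end
end

section
/- The Hamiltonian H(t, x(·), s) = ⟨s, x(t − h)⟩ satisfies condition (B.3) (Lipschitz continuity in the path variable in the uniform norm with factor λ(1 + ‖s‖)) but does not satisfy condition (B.4): there is no λ > 0 such that |H(t,x(·),s) − H(t,y(·),s)| ≤ λ(1+‖s‖)(‖x(t)−y(t)‖ + √(∫_{−h}^t ‖x(τ)−y(τ)‖² dτ)) for all t ∈ [0,T], x, y in a given compact set containing suitable paths, and all s ∈ ℝⁿ. -/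
/-!
Part (B.3) is Cauchy–Schwarz, since `t - h ∈ [-h, t]`. For (B.4), take `t = 0`, `x = 0` and
`y = g • e` with `e` a unit vector and `g` a narrow continuous tent with `g (-h) = 1`: the
Hamiltonian gap is `1`, while `y 0 = 0` and the `L²` norm of `y` on `[-h, 0]` is arbitrarily small.
-/

open scoped RealInnerProductSpace

open Set MeasureTheory intervalIntegral

theorem abs_inner_sub_inner_le {E : Type*} [NormedAddCommGroup E] [InnerProductSpace ℝ E]
    (s u v : E) : |⟪s, u⟫ - ⟪s, v⟫| ≤ ‖s‖ * ‖u - v‖ := by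
  rw [← inner_sub_right]
  exact abs_real_inner_le_norm s _

theorem le_sSup_image_Icc {f : ℝ → ℝ} {a b c : ℝ} (hf : ContinuousOn f (Icc a b))
    (hc : c ∈ Icc a b) : f c ≤ sSup (f '' Icc a b) :=
  le_csSup (isCompact_Icc.bddAbove_image hf) (mem_image_of_mem f hc)

theorem exists_continuous_integral_sq_lt {a b δ : ℝ} (hab : a < b) (hδ : 0 < δ) :
    ∃ g : ℝ → ℝ, Continuous g ∧ g a = 1 ∧ g b = 0 ∧ ∫ τ in a..b, g τ ^ 2 < δ := by
  set ε := min (b - a) (δ / 2)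
  have hε : 0 < ε := lt_min (sub_pos.2 hab) (half_pos hδ)
  have hεb : a + ε ≤ b := by linarith [min_le_left (b - a) (δ / 2)]
  have hεδ : ε < δ := by linarith [min_le_right (b - a) (δ / 2)]
  set g : ℝ → ℝ := fun τ => max 0 (1 - (τ - a) / ε)
  have hgc : Continuous g := by fun_prop
  have hg_zero : ∀ τ, a + ε ≤ τ → g τ = 0 := fun τ hτ =>
    max_eq_left (by rw [sub_nonpos, le_div_iff₀ hε]; linarith)
  have hg_le_one : ∀ τ, a ≤ τ → g τ ≤ 1 := fun τ hτ =>
    max_le zero_le_one (by have := div_nonneg (sub_nonneg.2 hτ) hε.le; linarith)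
  refine ⟨g, hgc, by simp [g], hg_zero b hεb, ?_⟩
  have hint : ∀ c d, IntervalIntegrable (fun τ => g τ ^ 2) volume c d := fun _ _ =>
    (hgc.pow 2).intervalIntegrable _ _
  rw [← integral_add_adjacent_intervals (hint a (a + ε)) (hint (a + ε) b)]
  have htail : ∫ τ in (a + ε)..b, g τ ^ 2 = 0 := by
    rw [integral_congr (g := fun _ => 0) fun τ hτ => by
      simp [hg_zero τ (uIcc_of_le hεb ▸ hτ).1]]
    exact integral_zero
  have hhead : ‖∫ τ in a..(a + ε), g τ ^ 2‖ ≤ 1 * |a + ε - a| :=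
    norm_integral_le_of_norm_le_const fun τ hτ => by
      rw [uIoc_of_le (by linarith)] at hτ
      rw [norm_pow, Real.norm_of_nonneg (le_max_left _ _)]
      exact pow_le_one₀ (le_max_left _ _) (hg_le_one τ hτ.1.le)
  rw [one_mul, add_sub_cancel_left, abs_of_pos hε] at hhead
  rw [htail, add_zero]
  exact ((le_abs_self _).trans hhead).trans_lt hεδ

theorem abs_inner_delay_sub_le_sSup {E : Type*} [NormedAddCommGroup E] [InnerProductSpace ℝ E]
    {x y : ℝ → E} {h t : ℝ} (hh : 0 ≤ h) (ht : 0 ≤ t) (hx : ContinuousOn x (Icc (-h) t))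
    (hy : ContinuousOn y (Icc (-h) t)) (s : E) :
    |⟪s, x (t - h)⟫ - ⟪s, y (t - h)⟫| ≤
      (1 + ‖s‖) * sSup ((fun τ => ‖x τ - y τ‖) '' Icc (-h) t) := by
  have hle := le_sSup_image_Icc (hx.sub hy).norm
    (show t - h ∈ Icc (-h) t from ⟨by linarith, by linarith⟩)
  calc |⟪s, x (t - h)⟫ - ⟪s, y (t - h)⟫| ≤ ‖s‖ * ‖x (t - h) - y (t - h)‖ :=
        abs_inner_sub_inner_le s _ _
    _ ≤ (1 + ‖s‖) * sSup ((fun τ => ‖x τ - y τ‖) '' Icc (-h) t) :=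
        mul_le_mul (by linarith) hle (norm_nonneg _) (by positivity)

theorem stmt12 (n : ℕ) (hn : 0 < n) (h T : ℝ) (hh : 0 < h) (hT : 0 < T) :
    (∃ lam > (0 : ℝ), ∀ t ∈ Set.Icc (0 : ℝ) T,
      ∀ x y : ℝ → EuclideanSpace ℝ (Fin n),
        ContinuousOn x (Set.Icc (-h) T) → ContinuousOn y (Set.Icc (-h) T) →
        ∀ s : EuclideanSpace ℝ (Fin n),
          |⟪s, x (t - h)⟫ - ⟪s, y (t - h)⟫| ≤
            lam * (1 + ‖s‖) * sSup ((fun τ => ‖x τ - y τ‖) '' Set.Icc (-h) t)) ∧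
    ¬ ∃ lam > (0 : ℝ), ∀ t ∈ Set.Icc (0 : ℝ) T,
      ∀ x y : ℝ → EuclideanSpace ℝ (Fin n),
        ContinuousOn x (Set.Icc (-h) T) → ContinuousOn y (Set.Icc (-h) T) →
        ∀ s : EuclideanSpace ℝ (Fin n),
          |⟪s, x (t - h)⟫ - ⟪s, y (t - h)⟫| ≤
            lam * (1 + ‖s‖) *
              (‖x t - y t‖ + Real.sqrt (∫ τ in (-h)..t, ‖x τ - y τ‖ ^ 2)) := by
  constructor
  · refine ⟨1, one_pos, fun t ht x y hx hy s => ?_⟩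
    have hsub : Icc (-h) t ⊆ Icc (-h) T := Icc_subset_Icc_right ht.2
    simpa only [one_mul] using
      abs_inner_delay_sub_le_sSup hh.le ht.1 (hx.mono hsub) (hy.mono hsub) s
  · rintro ⟨lam, hlam, hbound⟩
    obtain ⟨g, hgc, hg_start, hg_end, hg_int⟩ :=
      exists_continuous_integral_sq_lt (neg_lt_zero.2 hh) (by positivity : 0 < (1 / (2 * lam)) ^ 2)
    set e : EuclideanSpace ℝ (Fin n) := EuclideanSpace.single ⟨0, hn⟩ 1
    have he : ‖e‖ = 1 := by simp [e]
    have key := hbound 0 ⟨le_rfl, hT.le⟩ 0 (fun τ => g τ • e) continuousOn_const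
      (hgc.smul continuous_const).continuousOn e
    simp only [zero_sub, Pi.zero_apply, inner_zero_right, real_inner_smul_right,
      real_inner_self_eq_norm_sq, norm_neg, norm_smul, norm_zero, he, hg_start, hg_end, one_pow,
      mul_one, zero_add, abs_neg, abs_one, Real.norm_eq_abs, sq_abs] at key
    have hsqrt : √(∫ τ in (-h)..0, g τ ^ 2) * (2 * lam) < 1 :=
      (lt_div_iff₀ (by positivity)).1 ((Real.sqrt_lt' (by positivity)).2 hg_int)
    linarith
end
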